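/- arXiv:2503.22694 — 2 statements merged into one kernel-verified Lean document; each statement's English description precedes it below -/
import Mathlib

section
/- There is no map from any nonempty open subset of the unit sphere S² to the Euclidean plane that preserves distances up to a fixed positive scale factor; i.e., there is no nonempty open set Ω ⊆ S², constant c > 0, and map f : Ω → ℝ² such that dist(f x, f y) = c · dist(x, y) for all x, y ∈ Ω (where distance on S² is the intrinsic/geodesic distance). -/
open scoped RealInnerProductSpace

open Real

/-!
Fix `p ∈ Ω` and orthonormal `u, v ⊥ p`; for small `ε` take `a, b` at geodesic distance `ε` from `p`
on either side along the great circle through `p` and `u`, and `m` at distance `ε` towards `v`.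
A scaled isometry sends `a, p, b` to a segment with midpoint `f p`, so Apollonius's theorem in the
plane gives `D(ε)² = 2ε²` where `D(ε) = arccos (cos² ε) = d(m, a) = d(m, b)`. Comparing `ε` with
`ε/2` yields `D(ε) = 2 D(ε/2)`, and the double angle formula then forces `cos ε = 1`.
-/

theorem dist_sq_add_dist_sq_of_dist_eq_half {V P : Type*} [NormedAddCommGroup V]
    [InnerProductSpace ℝ V] [MetricSpace P] [NormedAddTorsor V P] {a b m : P}
    (ha : dist a m = dist a b / 2) (hb : dist m b = dist a b / 2) (x : P) :
    dist x a ^ 2 + dist x b ^ 2 = 2 * (dist x m ^ 2 + (dist a b / 2) ^ 2) := by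
  rw [eq_midpoint_of_dist_eq_half ha hb]
  exact EuclideanGeometry.dist_sq_add_dist_sq_eq_two_mul_dist_midpoint_sq_add_half_dist_sq x a b

section GreatCircle

variable {E : Type*} [NormedAddCommGroup E] [InnerProductSpace ℝ E]

noncomputable def greatCircle (p u : E) (t : ℝ) : E := cos t • p + sin t • u

@[simp]
theorem greatCircle_zero (p u : E) : greatCircle p u 0 = p := by
  simp [greatCircle]

variable {p u w : E}

theorem inner_greatCircle (hp : ‖p‖ = 1) (hpu : ⟪p, u⟫ = 0) (hpw : ⟪p, w⟫ = 0) (s t : ℝ) :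
    ⟪greatCircle p u s, greatCircle p w t⟫ = cos s * cos t + sin s * sin t * ⟪u, w⟫ := by
  simp only [greatCircle, inner_add_left, inner_add_right, real_inner_smul_left,
    real_inner_smul_right, real_inner_self_eq_norm_sq, hp, hpw, real_inner_comm p u ▸ hpu]
  ring

theorem inner_greatCircle_self (hp : ‖p‖ = 1) (hu : ‖u‖ = 1) (hpu : ⟪p, u⟫ = 0) (s t : ℝ) :
    ⟪greatCircle p u s, greatCircle p u t⟫ = cos (s - t) := by
  rw [inner_greatCircle hp hpu hpu, real_inner_self_eq_norm_sq, hu, cos_sub]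
  ring

theorem inner_greatCircle_of_inner_eq_zero (hp : ‖p‖ = 1) (hpu : ⟪p, u⟫ = 0) (hpw : ⟪p, w⟫ = 0)
    (huw : ⟪u, w⟫ = 0) (s t : ℝ) :
    ⟪greatCircle p u s, greatCircle p w t⟫ = cos s * cos t := by
  rw [inner_greatCircle hp hpu hpw, huw]
  ring

theorem inner_greatCircle_base (hp : ‖p‖ = 1) (hu : ‖u‖ = 1) (hpu : ⟪p, u⟫ = 0) (t : ℝ) :
    ⟪greatCircle p u t, p⟫ = cos t := by
  simpa using inner_greatCircle_self hp hu hpu t 0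

theorem norm_greatCircle (hp : ‖p‖ = 1) (hu : ‖u‖ = 1) (hpu : ⟪p, u⟫ = 0) (t : ℝ) :
    ‖greatCircle p u t‖ = 1 := by
  have h := inner_greatCircle_self hp hu hpu t t
  rw [sub_self, cos_zero, real_inner_self_eq_norm_sq] at h
  exact (pow_eq_one_iff_of_nonneg (norm_nonneg _) two_ne_zero).1 h

theorem dist_greatCircle_base_le (hp : ‖p‖ = 1) (hu : ‖u‖ = 1) (hpu : ⟪p, u⟫ = 0) (t : ℝ) :
    dist (greatCircle p u t) p ≤ |t| := by
  rw [← sq_le_sq₀ dist_nonneg (abs_nonneg t), sq_abs, dist_eq_norm, norm_sub_sq_real,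
    norm_greatCircle hp hu hpu, inner_greatCircle_base hp hu hpu, hp]
  linarith [one_sub_sq_div_two_le_cos (x := t)]

end GreatCircle

theorem exists_orthonormal_fin_three_apply_zero_eq {E : Type*} [NormedAddCommGroup E]
    [InnerProductSpace ℝ E] (hE : Module.finrank ℝ E = 3) {p : E} (hp : ‖p‖ = 1) :
    ∃ e : Fin 3 → E, Orthonormal ℝ e ∧ e 0 = p := by
  have : FiniteDimensional ℝ E := Module.finite_of_finrank_eq_succ hE
  have hunit : Orthonormal ℝ (({0} : Set (Fin 3)).domRestrict fun _ => p) :=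
    ⟨fun _ => hp, fun i j hij => absurd (Subtype.ext (i.2.trans j.2.symm)) hij⟩
  obtain ⟨b, hb⟩ := hunit.exists_orthonormalBasis_extension_of_card_eq (by simpa using hE)
  exact ⟨b, b.orthonormal, hb 0 rfl⟩

theorem arccos_cos_sq_sq_eq_two_mul_sq {E F : Type*} [NormedAddCommGroup E]
    [InnerProductSpace ℝ E] [NormedAddCommGroup F] [InnerProductSpace ℝ F] {S : Set E}
    {f : E → F} {c ε : ℝ} {e : Fin 3 → E} (he : Orthonormal ℝ e) (hc : 0 < c) (hε₀ : 0 ≤ ε)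
    (hε : ε ≤ π / 2) (hS : ∀ x, ‖x‖ = 1 → dist x (e 0) ≤ ε → x ∈ S)
    (hf : ∀ x ∈ S, ∀ y ∈ S, dist (f x) (f y) = c * arccos ⟪x, y⟫) :
    arccos (cos ε ^ 2) ^ 2 = 2 * ε ^ 2 := by
  have hp := he.1 0
  have hu := he.1 1
  have hpu : ⟪e 0, e 1⟫ = 0 := he.2 (by decide)
  have hpv : ⟪e 0, e 2⟫ = 0 := he.2 (by decide)
  have hvu : ⟪e 2, e 1⟫ = 0 := he.2 (by decide)
  have mem : ∀ w, ‖w‖ = 1 → ⟪e 0, w⟫ = 0 → ∀ t, |t| ≤ ε → greatCircle (e 0) w t ∈ S :=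
    fun w hw hpw t ht =>
      hS _ (norm_greatCircle hp hw hpw t) ((dist_greatCircle_base_le hp hw hpw t).trans ht)
  set a := greatCircle (e 0) (e 1) ε
  set b := greatCircle (e 0) (e 1) (-ε)
  set m := greatCircle (e 0) (e 2) ε
  have ha : a ∈ S := mem _ hu hpu ε (abs_of_nonneg hε₀).le
  have hb : b ∈ S := mem _ hu hpu (-ε) (by rw [abs_neg, abs_of_nonneg hε₀])
  have hm : m ∈ S := mem _ (he.1 2) hpv ε (abs_of_nonneg hε₀).le
  have hpS : e 0 ∈ S := by simpa using mem _ hu hpu 0 (by simpa using hε₀)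
  have arccos_cos_ε : arccos (cos ε) = ε := arccos_cos hε₀ (by linarith [pi_pos])
  have hap : dist (f a) (f (e 0)) = c * ε := by
    rw [hf a ha _ hpS, inner_greatCircle_base hp hu hpu, arccos_cos_ε]
  have hpb : dist (f (e 0)) (f b) = c * ε := by
    rw [hf _ hpS b hb, real_inner_comm, inner_greatCircle_base hp hu hpu, cos_neg, arccos_cos_ε]
  have hmp : dist (f m) (f (e 0)) = c * ε := by
    rw [hf m hm _ hpS, inner_greatCircle_base hp (he.1 2) hpv, arccos_cos_ε]
  have hab : dist (f a) (f b) = c * (2 * ε) := by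
    rw [hf a ha b hb, inner_greatCircle_self hp hu hpu, sub_neg_eq_add, ← two_mul,
      arccos_cos (by linarith) (by linarith)]
  have hma : dist (f m) (f a) = c * arccos (cos ε ^ 2) := by
    rw [hf m hm a ha, inner_greatCircle_of_inner_eq_zero hp hpv hpu hvu, sq]
  have hmb : dist (f m) (f b) = c * arccos (cos ε ^ 2) := by
    rw [hf m hm b hb, inner_greatCircle_of_inner_eq_zero hp hpv hpu hvu, cos_neg, sq]
  have apollonius := dist_sq_add_dist_sq_of_dist_eq_half (a := f a) (b := f b) (m := f (e 0))
    (by rw [hap, hab]; ring) (by rw [hpb, hab]; ring) (f m)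
  rw [hma, hmb, hmp, hab] at apollonius
  have hc2 : c ^ 2 ≠ 0 := by positivity
  apply mul_left_cancel₀ hc2
  linear_combination apollonius / 2

theorem arccos_cos_sq_sq_ne_two_mul_sq {ε : ℝ} (hε : cos ε ≠ 1)
    (hhalf : arccos (cos (ε / 2) ^ 2) ^ 2 = 2 * (ε / 2) ^ 2) :
    arccos (cos ε ^ 2) ^ 2 ≠ 2 * ε ^ 2 := by
  intro h
  have hD : arccos (cos ε ^ 2) = 2 * arccos (cos (ε / 2) ^ 2) :=
    (sq_eq_sq₀ (arccos_nonneg _) (by positivity [arccos_nonneg (cos (ε / 2) ^ 2)])).1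
      (by rw [h, mul_pow, hhalf]; ring)
  have hcos := congrArg cos hD
  have hcos_sq_ge : ∀ x, -1 ≤ cos x ^ 2 := fun x => by nlinarith [sq_nonneg (cos x)]
  rw [cos_two_mul, cos_arccos (hcos_sq_ge _) (cos_sq_le_one _),
    cos_arccos (hcos_sq_ge _) (cos_sq_le_one _), cos_sq (ε / 2), mul_div_cancel₀ ε two_ne_zero]
    at hcos
  have : (cos ε - 1) ^ 2 = 0 := by linear_combination 2 * hcos
  exact hε (sub_eq_zero.1 (pow_eq_zero_iff two_ne_zero |>.1 this))

/-- There is no map from a nonempty open subset `Ω` of the unit sphere `S² ⊂ ℝ³`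
(openness in the subspace topology of the sphere), equipped with its intrinsic
great-circle distance `arccos ⟪x, y⟫`, to the Euclidean plane, preserving distances
up to a fixed positive scale factor `c`. -/
theorem no_scaled_isometry_sphere_to_plane :
    ¬ ∃ (Ω : Set (EuclideanSpace ℝ (Fin 3))) (c : ℝ)
        (f : EuclideanSpace ℝ (Fin 3) → EuclideanSpace ℝ (Fin 2)),
      Ω.Nonempty ∧
      Ω ⊆ Metric.sphere (0 : EuclideanSpace ℝ (Fin 3)) 1 ∧
      IsOpen ((Subtype.val ⁻¹' Ω) :
        Set (Metric.sphere (0 : EuclideanSpace ℝ (Fin 3)) 1)) ∧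
      0 < c ∧
      ∀ x ∈ Ω, ∀ y ∈ Ω, dist (f x) (f y) = c * Real.arccos ⟪x, y⟫ := by
  rintro ⟨Ω, c, f, ⟨p, hp⟩, hΩ, hopen, hc, hf⟩
  obtain ⟨r, hr, hball⟩ := Metric.isOpen_iff.mp hopen ⟨p, hΩ hp⟩ hp
  obtain ⟨e, he, rfl⟩ := exists_orthonormal_fin_three_apply_zero_eq finrank_euclideanSpace_fin
    (norm_eq_of_mem_sphere ⟨p, hΩ hp⟩)
  have key : ∀ ε, 0 ≤ ε → ε ≤ π / 2 → ε < r → arccos (cos ε ^ 2) ^ 2 = 2 * ε ^ 2 :=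
    fun ε hε₀ hε hεr => arccos_cos_sq_sq_eq_two_mul_sq he hc hε₀ hε
      (fun x hx hxe => hball (a := ⟨x, mem_sphere_zero_iff_norm.2 hx⟩) (hxe.trans_lt hεr)) hf
  set ε := min (r / 2) 1
  have hε₀ : 0 < ε := by positivity
  have hε : ε ≤ π / 2 := (min_le_right _ _).trans (by linarith [pi_gt_three])
  have hεr : ε < r := (min_le_left _ _).trans_lt (half_lt_self hr)
  have hcos : cos ε ≠ 1 := fun h =>
    hε₀.ne' ((cos_eq_one_iff_of_lt_of_lt (by linarith [pi_pos]) (by linarith [pi_pos])).1 h)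
  exact arccos_cos_sq_sq_ne_two_mul_sq hcos (key _ (by positivity) (by linarith) (by linarith))
    (key ε hε₀.le hε hεr)
end

section
/- Let ABC be a spherical triangle on the unit sphere with all side lengths less than π, let D be the midpoint of the geodesic arc AB and E the midpoint of the geodesic arc BC. Then the geodesic distance from D to E is strictly greater than half the geodesic distance from A to C. (Menelaus, Spherics, Proposition 27.) -/
/-!
With `t = ⟪A, C⟫`, `u = ⟪A, B⟫`, `v = ⟪B, C⟫`, the half-angle formula gives
`cos (AC / 2) = ‖A + C‖ / 2`, while `cos DE = ⟪A + B, B + C⟫ / (‖A + B‖ ‖B + C‖)`. Since `arccos`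
is decreasing, the claim is `2 ⟪A + B, B + C⟫ < ‖A + B‖ ‖B + C‖ ‖A + C‖`. Squared, the right side
is `8 (1 + t) (1 + u) (1 + v)` and the left side is `4 (1 + t + u + v) ^ 2`; their difference is
four times the Gram determinant `1 - t² - u² - v² + 2tuv` of `A, B, C`, which is positive because
the three vectors are linearly independent.
-/

open scoped RealInnerProductSpace
open Real

theorem LinearIndependent.add_ne_zero {ι R M : Type*} [Ring R] [Nontrivial R] [AddCommGroup M]
    [Module R M] {v : ι → M} (h : LinearIndependent R v) {i j : ι} (hij : i ≠ j) :
    v i + v j ≠ 0 :=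
  fun hv ↦ one_ne_zero ((LinearIndepOn.pair_iff v hij).1 (h.linearIndepOn _) 1 1
    (by simpa using hv)).1

section UnitVectors

variable {V : Type*} [NormedAddCommGroup V] [InnerProductSpace ℝ V] {u v w : V}

theorem det_gram_fin_three_of_norm_eq_one (hu : ‖u‖ = 1) (hv : ‖v‖ = 1) (hw : ‖w‖ = 1) :
    (Matrix.gram ℝ ![u, v, w]).det =
      1 - ⟪u, v⟫ ^ 2 - ⟪v, w⟫ ^ 2 - ⟪u, w⟫ ^ 2 + 2 * ⟪u, v⟫ * ⟪v, w⟫ * ⟪u, w⟫ := by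
  simp only [Matrix.det_fin_three, Matrix.gram_apply, Matrix.cons_val_zero, Matrix.cons_val_one,
    Matrix.cons_val_two, Matrix.head_cons, Matrix.tail_cons, real_inner_self_eq_norm_sq, hu, hv,
    hw, real_inner_comm u v, real_inner_comm u w, real_inner_comm v w]
  ring

theorem two_mul_inner_add_add_lt (hu : ‖u‖ = 1) (hv : ‖v‖ = 1) (hw : ‖w‖ = 1)
    (h : LinearIndependent ℝ ![u, v, w]) :
    2 * ⟪u + v, v + w⟫ < ‖u + v‖ * ‖v + w‖ * ‖u + w‖ := by
  have hgram := (Matrix.posDef_gram_of_linearIndependent h).det_pos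
  rw [det_gram_fin_three_of_norm_eq_one hu hv hw] at hgram
  have hsq : (2 * ⟪u + v, v + w⟫) ^ 2 < (‖u + v‖ * ‖v + w‖ * ‖u + w‖) ^ 2 := by
    simp only [mul_pow, norm_add_sq_real, inner_add_left, inner_add_right,
      real_inner_self_eq_norm_sq, hu, hv, hw]
    linear_combination 4 * hgram
  exact lt_of_pow_lt_pow_left₀ 2 (by positivity) hsq

theorem arccos_inner_div_two (hu : ‖u‖ = 1) (hw : ‖w‖ = 1) :
    arccos ⟪u, w⟫ / 2 = arccos (‖u + w‖ / 2) := by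
  have hbound : |⟪u, w⟫| ≤ 1 := by simpa [hu, hw] using abs_real_inner_le_norm u w
  have harccos : 0 ≤ arccos ⟪u, w⟫ ∧ arccos ⟪u, w⟫ ≤ π := ⟨arccos_nonneg _, arccos_le_pi _⟩
  have hcos : cos (arccos ⟪u, w⟫ / 2) = ‖u + w‖ / 2 := by
    rw [cos_half (by linarith [pi_pos]) harccos.2,
      cos_arccos (neg_le_of_abs_le hbound) (le_of_abs_le hbound)]
    refine (sqrt_eq_iff_eq_sq (by linarith [neg_le_of_abs_le hbound]) (by positivity)).2 ?_
    rw [div_pow, norm_add_sq_real, hu, hw]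
    ring
  rw [← hcos, arccos_cos (by linarith) (by linarith [pi_pos])]

end UnitVectors

theorem menelaus_prop_27_general
    (A B C : EuclideanSpace ℝ (Fin 3))
    (hA : ‖A‖ = 1) (hB : ‖B‖ = 1) (hC : ‖C‖ = 1)
    (hind : LinearIndependent ℝ ![A, B, C])
    (D E : EuclideanSpace ℝ (Fin 3))
    (hD : D = ‖A + B‖⁻¹ • (A + B))
    (hE : E = ‖B + C‖⁻¹ • (B + C)) :
    Real.arccos ⟪A, C⟫ / 2 < Real.arccos ⟪D, E⟫ := by
  have hAB : A + B ≠ 0 := hind.add_ne_zero (i := 0) (j := 1) (by decide)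
  have hBC : B + C ≠ 0 := hind.add_ne_zero (i := 1) (j := 2) (by decide)
  have hDE : ⟪D, E⟫ = ⟪A + B, B + C⟫ / (‖A + B‖ * ‖B + C‖) := by
    rw [hD, hE, real_inner_smul_left, real_inner_smul_right]
    field_simp
  have hD1 : ‖D‖ = 1 := hD ▸ norm_smul_inv_norm hAB
  have hE1 : ‖E‖ = 1 := hE ▸ norm_smul_inv_norm hBC
  rw [arccos_inner_div_two hA hC]
  refine arccos_lt_arccos ?_ ?_ ?_
  · simpa [hD1, hE1] using neg_le_of_abs_le (abs_real_inner_le_norm D E)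
  · rw [hDE, div_lt_iff₀ (by positivity)]
    linarith [two_mul_inner_add_add_lt hA hB hC hind]
  · linarith [norm_add_le A C]

/-- Menelaus, *Spherics*, Proposition 27: in a nondegenerate spherical triangle `ABC`
on the unit sphere (vertices linearly independent, all sides of geodesic length `< π`),
if `D` is the midpoint of arc `AB` and `E` the midpoint of arc `BC`
(explicitly `M = (P + Q)/‖P + Q‖`), then the geodesic distance `DE` is strictly
greater than half the geodesic distance `AC`.  Geodesic distance is
`dist(x, y) = arccos ⟪x, y⟫`. -/
theorem menelaus_prop_27
    (A B C : EuclideanSpace ℝ (Fin 3))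
    (hA : ‖A‖ = 1) (hB : ‖B‖ = 1) (hC : ‖C‖ = 1)
    (hind : LinearIndependent ℝ ![A, B, C])
    (hAB : Real.arccos ⟪A, B⟫ < π) (hBC : Real.arccos ⟪B, C⟫ < π)
    (hAC : Real.arccos ⟪A, C⟫ < π)
    (D E : EuclideanSpace ℝ (Fin 3))
    (hD : D = ‖A + B‖⁻¹ • (A + B))
    (hE : E = ‖B + C‖⁻¹ • (B + C)) :
    Real.arccos ⟪A, C⟫ / 2 < Real.arccos ⟪D, E⟫ :=
  menelaus_prop_27_general A B C hA hB hC hind D E hD hE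
end
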